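/- arXiv:1801.03347 — 4 statements merged into one kernel-verified Lean document; each statement's English description precedes it below -/
import Mathlib

section
/- Let G=(V,E,w) be a connected weighted graph with edge weights in the open interval (0,1). Define the quality of a cluster C ⊆ V (a nonempty subset inducing a connected subgraph) as Φ(C) = 0 if C = V, Φ(C) = max(Out(C)) if |C| = 1, and Φ(C) = max(Out(C))/min(MST(C)) otherwise, where Out(C) is the set of edges with exactly one endpoint in C, MST(C) is a maximum spanning tree of the subgraph induced by C, and max/min denote maximum/minimum edge weights. Then for any k ≥ 1, there exists a partition of V into k clusters C_1,...,C_k (each inducing a connected subgraph) such that max_i Φ(C_i) ≤ 1. In particular, any partition minimizing max_i Φ(C_i) over all k-partitions has value at most 1. -/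
/-!
Fix a maximum spanning tree `T` of `G` and, starting from the single cluster `V`, repeatedly cut a
cluster with at least two vertices along its lightest `T`-edge. Every cluster `C` produced stays
spanned by `T`, and no edge leaving `C` is heavier than a `T`-edge inside `C`: an edge of `G` that
crosses a new cut `ab` is no heavier than `ab` by the cut property of `T`, and `ab` was the lightest
`T`-edge inside the cluster being cut. Finally, by the cut property of a maximum spanning tree `T'`
of `G[C]`, each edge of `T'` is at least as heavy as some `T`-edge inside `C`; so
`max(Out(C)) ≤ min(MST(C))`, i.e. `Φ(C) ≤ 1`.
-/

open scoped Classical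
noncomputable section

namespace Bal

variable {V : Type*}

/-- Total weight of the edges of a graph. -/
def totalWeight {α : Type*} [Fintype α] (H : SimpleGraph α) (w : Sym2 α → ℝ) : ℝ :=
  ∑ e : Sym2 α, if e ∈ H.edgeSet then w e else 0

/-- `T` is a maximum spanning tree of `G` w.r.t. the weight `w`. -/
def IsMaxSpanTree {α : Type*} [Fintype α] (G T : SimpleGraph α) (w : Sym2 α → ℝ) : Prop :=
  T ≤ G ∧ T.IsTree ∧
    ∀ T' : SimpleGraph α, T' ≤ G → T'.IsTree → totalWeight T' w ≤ totalWeight T w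

/-- Weight function on the induced subgraph on `C`. -/
def subWeight (w : Sym2 V → ℝ) (C : Set V) : Sym2 C → ℝ :=
  fun e => w (e.map Subtype.val)

/-- Edges of `G` with exactly one endpoint in `C`. -/
def outEdges (G : SimpleGraph V) (C : Set V) : Set (Sym2 V) :=
  {e | e ∈ G.edgeSet ∧ ∃ a b, e = s(a, b) ∧ a ∈ C ∧ b ∉ C}

/-- Edges of `G` with both endpoints in `C`. -/
def inEdges (G : SimpleGraph V) (C : Set V) : Set (Sym2 V) :=
  {e | e ∈ G.edgeSet ∧ ∀ x ∈ e, x ∈ C}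

/-- `max(Out(C))`, with the convention `sSup ∅ = 0`. -/
def maxOut (G : SimpleGraph V) (w : Sym2 V → ℝ) (C : Set V) : ℝ :=
  sSup (w '' outEdges G C)

/-- `min(E(C))`, with the convention that it is `1` for singletons. -/
def minIn (G : SimpleGraph V) (w : Sym2 V → ℝ) (C : Set V) : ℝ :=
  if C.Subsingleton then 1 else sInf (w '' inEdges G C)

/-- `min(MST(C))` : minimum weight of an edge of a maximum spanning tree of `G[C]`,
with the convention that it is `1` for singletons. -/
def minMST [Fintype V] (G : SimpleGraph V) (w : Sym2 V → ℝ) (C : Set V) : ℝ :=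
  if C.Subsingleton then 1
  else if h : ∃ T : SimpleGraph C, IsMaxSpanTree (G.induce C) T (subWeight w C) then
    sInf (subWeight w C '' h.choose.edgeSet)
  else 1

/-- Quality measure of a cluster in a graph: `max(Out(C)) / min(MST(C))`. -/
def phi [Fintype V] (G : SimpleGraph V) (w : Sym2 V → ℝ) (C : Set V) : ℝ :=
  maxOut G w C / minMST G w C

/-- Quality measure of a cluster in a tree: `max(Out(C)) / min(E(C))`. -/
def phiT (G : SimpleGraph V) (w : Sym2 V → ℝ) (C : Set V) : ℝ :=
  maxOut G w C / minIn G w C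

/-- `𝒞` is a partition of `U ⊆ V` into `G`-connected parts. -/
def IsPartitionOn (G : SimpleGraph V) (U : Set V) (𝒞 : Set (Set V)) : Prop :=
  (∀ C ∈ 𝒞, C.Nonempty ∧ C ⊆ U ∧ (G.induce C).Connected) ∧
  (∀ C ∈ 𝒞, ∀ C' ∈ 𝒞, C ≠ C' → Disjoint C C') ∧ ⋃₀ 𝒞 = U

/-- A `k`-clustering of a graph `G` on vertex set `V`. -/
def IsClustering (G : SimpleGraph V) (𝒞 : Set (Set V)) (k : ℕ) : Prop :=
  IsPartitionOn G Set.univ 𝒞 ∧ 𝒞.ncard = k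

/-- Evaluation of a clustering of a graph (min-max quality measure, MST-based). -/
def eval [Fintype V] (G : SimpleGraph V) (w : Sym2 V → ℝ) (𝒞 : Set (Set V)) : ℝ :=
  sSup (phi G w '' 𝒞)

/-- Evaluation of a clustering of a tree. -/
def evalT (G : SimpleGraph V) (w : Sym2 V → ℝ) (𝒞 : Set (Set V)) : ℝ :=
  sSup (phiT G w '' 𝒞)

/-- `𝒞` is an optimal `k`-clustering of `G`. -/
def IsOptimal [Fintype V] (G : SimpleGraph V) (w : Sym2 V → ℝ) (k : ℕ) (𝒞 : Set (Set V)) : Prop :=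
  IsClustering G 𝒞 k ∧ ∀ 𝒟, IsClustering G 𝒟 k → eval G w 𝒞 ≤ eval G w 𝒟

/-- All edge weights lie in the open interval `(0,1)`. -/
def weightsOK (G : SimpleGraph V) (w : Sym2 V → ℝ) : Prop :=
  ∀ e ∈ G.edgeSet, 0 < w e ∧ w e < 1

/-- The set of connected components (as vertex sets) of a graph. -/
def components (G : SimpleGraph V) : Set (Set V) :=
  {C | ∃ x : V, C = {y | G.Reachable x y}}

end Bal

namespace SimpleGraph

variable {α : Type*} {T : SimpleGraph α} {a b : α}

lemma IsAcyclic.not_reachable_deleteEdges (hT : T.IsAcyclic) (hab : T.Adj a b) :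
    ¬(T.deleteEdges {s(a, b)}).Reachable a b :=
  isBridge_iff.1 (isAcyclic_iff_forall_adj_isBridge.1 hT hab)

lemma Walk.reachable_deleteEdges_or {x y : α} (p : T.Walk x y)
    (hy : (T.deleteEdges {s(a, b)}).Reachable y a ∨ (T.deleteEdges {s(a, b)}).Reachable y b) :
    (T.deleteEdges {s(a, b)}).Reachable x a ∨ (T.deleteEdges {s(a, b)}).Reachable x b := by
  induction p with
  | nil => exact hy
  | @cons x z _ hxz _ ih =>
    by_cases he : s(x, z) = s(a, b)
    · rcases Sym2.eq_iff.1 he with ⟨rfl, -⟩ | ⟨rfl, -⟩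
      exacts [.inl .rfl, .inr .rfl]
    · have hF : (T.deleteEdges {s(a, b)}).Adj x z := by simp [hxz, he]
      exact (ih hy).imp hF.reachable.trans hF.reachable.trans

lemma Preconnected.reachable_deleteEdges_or (hT : T.Preconnected) (a b x : α) :
    (T.deleteEdges {s(a, b)}).Reachable x a ∨ (T.deleteEdges {s(a, b)}).Reachable x b :=
  (hT x a).some.reachable_deleteEdges_or (.inl .rfl)

lemma IsTree.deleteEdges_sup_edge (hT : T.IsTree) {u v : α}
    (huv : ¬(T.deleteEdges {s(a, b)}).Reachable u v) :
    (T.deleteEdges {s(a, b)} ⊔ edge u v).IsTree := by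
  set F := T.deleteEdges {s(a, b)}
  have hFH : F ≤ F ⊔ edge u v := le_sup_left
  have hne : u ≠ v := by rintro rfl; exact huv .rfl
  have huvH : (F ⊔ edge u v).Reachable u v :=
    Adj.reachable (Or.inr (by simp [edge_adj, hne]))
  -- every vertex reaches `a` or `b` in `T - ab`, and `uv` joins these two sides
  have hside := hT.connected.preconnected.reachable_deleteEdges_or a b
  have habH : (F ⊔ edge u v).Reachable a b := by
    rcases hside u with hu | hu <;> rcases hside v with hv | hv
    · exact absurd (hu.trans hv.symm) huv
    · exact ((hu.mono hFH).symm.trans huvH).trans (hv.mono hFH)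
    · exact ((hv.mono hFH).symm.trans huvH.symm).trans (hu.mono hFH)
    · exact absurd (hu.trans hv.symm) huv
  have : Nonempty α := ⟨a⟩
  refine ⟨(connected_iff_exists_forall_reachable _).2 ⟨a, fun x => ?_⟩,
    (hT.isAcyclic.anti (deleteEdges_le _)).sup_edge_of_not_reachable huv⟩
  rcases hside x with hx | hx
  · exact (hx.mono hFH).symm
  · exact habH.trans (hx.mono hFH).symm

/-- The side of `a` is the image of the component of `a` in `T[C] - ab`. -/
lemma IsAcyclic.connected_induce_side (hT : T.IsAcyclic) {C : Set α} (hC : (T.induce C).Connected)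
    (hab : T.Adj a b) (ha : a ∈ C) (hb : b ∈ C) :
    (T.induce {v ∈ C | (T.deleteEdges {s(a, b)}).Reachable a v}).Connected := by
  set K := (T.induce C).deleteEdges {s(⟨a, ha⟩, ⟨b, hb⟩)}
  let φ : K →g T.deleteEdges {s(a, b)} :=
    ⟨Subtype.val, fun h => deleteEdges_adj.2 ⟨(deleteEdges_adj.1 h).1, fun he =>
      (deleteEdges_adj.1 h).2 (Sym2.map.injective Subtype.val_injective he)⟩⟩
  have hK : ∀ v (hv : v ∈ C),
      (T.deleteEdges {s(a, b)}).Reachable a v → K.Reachable ⟨a, ha⟩ ⟨v, hv⟩ := by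
    intro v hv hav
    refine (hC.preconnected.reachable_deleteEdges_or _ _ ⟨v, hv⟩).elim Reachable.symm fun hvb => ?_
    exact absurd (hav.trans (hvb.map φ)) (hT.not_reachable_deleteEdges hab)
  set c := K.connectedComponentMk ⟨a, ha⟩
  let ψ : c.toSimpleGraph →g T.induce {v ∈ C | (T.deleteEdges {s(a, b)}).Reachable a v} :=
    ⟨fun x => ⟨x.1.1, x.1.2, (ConnectedComponent.exact x.2).symm.map φ⟩,
      fun h => (deleteEdges_adj.1 h).1⟩
  exact c.connected_toSimpleGraph.map ψ
    fun ⟨v, hvC, hv⟩ => ⟨⟨⟨v, hvC⟩, ConnectedComponent.sound (hK v hvC hv).symm⟩, rfl⟩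

end SimpleGraph

namespace Bal

open SimpleGraph

variable {V : Type*}

section SpanningTree

variable {α : Type*} [Fintype α] {G T : SimpleGraph α} {w : Sym2 α → ℝ} {a b : α}

lemma IsMaxSpanTree.le (hT : IsMaxSpanTree G T w) : T ≤ G := hT.1

lemma IsMaxSpanTree.isTree (hT : IsMaxSpanTree G T w) : T.IsTree := hT.2.1

lemma totalWeight_add_eq_of_edgeSet_eq {H : SimpleGraph α} {e f : Sym2 α} (he : e ∈ T.edgeSet)
    (hf : f ∉ T.edgeSet) (hH : H.edgeSet = insert f (T.edgeSet \ {e})) :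
    totalWeight H w + w e = totalWeight T w + w f := by
  have hsum (g : Sym2 α) : w g = ∑ x, if x = g then w x else 0 := by simp
  rw [hsum e, hsum f, totalWeight, totalWeight, ← Finset.sum_add_distrib, ← Finset.sum_add_distrib]
  refine Finset.sum_congr rfl fun x _ => ?_
  by_cases hxe : x = e <;> by_cases hxf : x = f <;> simp_all

/-- The cut property, by exchanging `ab` for `pq` in `T`. -/
theorem IsMaxSpanTree.weight_le_of_not_reachable (hT : IsMaxSpanTree G T w) (hab : T.Adj a b)
    {p q : α} (hpq : G.Adj p q) (hcut : ¬(T.deleteEdges {s(a, b)}).Reachable p q) :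
    w s(p, q) ≤ w s(a, b) := by
  by_cases he : s(p, q) = s(a, b)
  · rw [he]
  set H := T.deleteEdges {s(a, b)} ⊔ edge p q
  have hHG : H ≤ G := sup_le ((deleteEdges_le _).trans hT.le) ((edge_le_iff _).2 (.inr hpq))
  have hpqT : s(p, q) ∉ T.edgeSet := fun h =>
    hcut (deleteEdges_adj.2 ⟨h, by simpa using he⟩).reachable
  have hH : H.edgeSet = insert s(p, q) (T.edgeSet \ {s(a, b)}) := by
    rw [edgeSet_sup, edgeSet_deleteEdges, edgeSet_edge_of_ne hpq.ne, Set.union_singleton]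
  have := totalWeight_add_eq_of_edgeSet_eq (w := w) hab hpqT hH
  linarith [hT.2.2 H hHG (hT.isTree.deleteEdges_sup_edge hcut)]

/-- Some edge of a `K`-walk from `a` to `b` crosses the cut of `T - ab`. -/
theorem IsMaxSpanTree.exists_adj_weight_le (hT : IsMaxSpanTree G T w) (hab : T.Adj a b)
    {K : SimpleGraph α} (hKG : K ≤ G) (hK : K.Reachable a b) :
    ∃ x y, K.Adj x y ∧ w s(x, y) ≤ w s(a, b) := by
  obtain ⟨p⟩ := hK
  obtain ⟨d, -, hd₁, hd₂⟩ := p.exists_boundary_dart {x | (T.deleteEdges {s(a, b)}).Reachable a x}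
    .rfl (hT.isTree.isAcyclic.not_reachable_deleteEdges hab)
  exact ⟨d.fst, d.snd, d.adj,
    hT.weight_le_of_not_reachable hab (hKG d.adj) fun h => hd₂ (hd₁.trans h)⟩

theorem exists_isMaxSpanTree (hG : G.Connected) (w : Sym2 α → ℝ) : ∃ T, IsMaxSpanTree G T w := by
  have : Finite (SimpleGraph α) := .of_injective _ SimpleGraph.adj_injective
  obtain ⟨T, ⟨hTG, hT⟩, hmax⟩ := Set.exists_max_image {H : SimpleGraph α | H ≤ G ∧ H.IsTree}
    (totalWeight · w) (Set.toFinite _) hG.exists_isTree_le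
  exact ⟨T, hTG, hT, fun T' h₁ h₂ => hmax T' ⟨h₁, h₂⟩⟩

end SpanningTree

section TreeClusters

variable {G T : SimpleGraph V} {w : Sym2 V → ℝ} {C : Set V}

/-- The invariant kept by the clusters obtained from `V` by repeatedly cutting a cluster along its
lightest edge of the maximum spanning tree `T`. -/
def IsTreeCluster (G T : SimpleGraph V) (w : Sym2 V → ℝ) (C : Set V) : Prop :=
  (T.induce C).Connected ∧ ∀ e ∈ outEdges G C, ∀ x ∈ C, ∀ y ∈ C, T.Adj x y → w e ≤ w s(x, y)

lemma IsTreeCluster.connected_induce (hTG : T ≤ G) (hC : IsTreeCluster G T w C) :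
    (G.induce C).Connected :=
  hC.1.mono fun _ _ h => hTG h

lemma isTreeCluster_univ (hT : T.IsTree) : IsTreeCluster G T w Set.univ :=
  ⟨(induceUnivIso T).connected_iff.2 hT.connected, fun _ ⟨_, _, _, _, _, hb⟩ => absurd trivial hb⟩

lemma maxOut_le {r : ℝ} (hr : 0 ≤ r) (h : ∀ e ∈ outEdges G C, w e ≤ r) : maxOut G w C ≤ r :=
  Real.sSup_le (by rintro _ ⟨e, he, rfl⟩; exact h e he) hr

variable [Fintype V]

lemma exists_isMaxSpanTree_minMST_eq (hC : (G.induce C).Connected) (hCn : C.Nontrivial) :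
    ∃ T' : SimpleGraph C, IsMaxSpanTree (G.induce C) T' (subWeight w C) ∧
      ∃ u v, T'.Adj u v ∧ minMST G w C = w s(↑u, ↑v) := by
  have hex := exists_isMaxSpanTree hC (subWeight w C)
  have : Nontrivial C := hCn.coe_sort
  obtain ⟨u₀, hu₀⟩ :=
    hex.choose_spec.isTree.connected.preconnected.exists_adj_of_nontrivial (Classical.arbitrary C)
  obtain ⟨f, hf, hmin⟩ := Set.exists_min_image _ (subWeight w C) (Set.toFinite _)
    ⟨_, (mem_edgeSet _).2 hu₀⟩
  induction f with | h u v => ?_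
  refine ⟨hex.choose, hex.choose_spec, u, v, hf, ?_⟩
  rw [minMST, if_neg hCn.not_subsingleton, dif_pos hex]
  exact IsLeast.csInf_eq ⟨Set.mem_image_of_mem _ hf, by rintro _ ⟨g, hg, rfl⟩; exact hmin g hg⟩

/-- By the cut property of `T'`, the edge `uv` is at least as heavy as some `T`-edge inside `C`. -/
lemma IsTreeCluster.weight_le_of_isMaxSpanTree_induce (hT : IsMaxSpanTree G T w)
    (hC : IsTreeCluster G T w C) {T' : SimpleGraph C}
    (hT' : IsMaxSpanTree (G.induce C) T' (subWeight w C)) {u v : C} (huv : T'.Adj u v)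
    {e : Sym2 V} (he : e ∈ outEdges G C) : w e ≤ w s(↑u, ↑v) := by
  obtain ⟨x, y, hxy, hle⟩ :=
    hT'.exists_adj_weight_le huv (fun _ _ h => hT.le h) (hC.1.preconnected u v)
  exact (hC.2 e he x x.2 y y.2 hxy).trans hle

lemma IsTreeCluster.phi_le_one (hw : weightsOK G w) (hT : IsMaxSpanTree G T w)
    (hC : IsTreeCluster G T w C) : phi G w C ≤ 1 := by
  rcases C.subsingleton_or_nontrivial with hsub | hCn
  · rw [phi, minMST, if_pos hsub, div_one]
    exact maxOut_le zero_le_one fun e he => (hw e he.1).2.le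
  obtain ⟨T', hT', u, v, huv, hmin⟩ :=
    exists_isMaxSpanTree_minMST_eq (w := w) (hC.connected_induce hT.le) hCn
  have hpos : 0 < w s(↑u, ↑v) := (hw _ (hT'.le huv)).1
  rw [phi, hmin, div_le_one hpos]
  exact maxOut_le hpos.le fun e he => hC.weight_le_of_isMaxSpanTree_induce hT hT' huv he

lemma IsTreeCluster.cut_lightest (hT : IsMaxSpanTree G T w) (hC : IsTreeCluster G T w C)
    {a b : V} (hab : T.Adj a b) (ha : a ∈ C) (hb : b ∈ C)
    (hmin : ∀ x ∈ C, ∀ y ∈ C, T.Adj x y → w s(a, b) ≤ w s(x, y)) :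
    IsTreeCluster G T w {v ∈ C | (T.deleteEdges {s(a, b)}).Reachable a v} := by
  refine ⟨hT.isTree.isAcyclic.connected_induce_side hC.1 hab ha hb, ?_⟩
  rintro _ ⟨hpq, p, q, rfl, ⟨hpC, hap⟩, hqA⟩ x ⟨hxC, -⟩ y ⟨hyC, -⟩ hxy
  by_cases hqC : q ∈ C
  · have hqb : (T.deleteEdges {s(a, b)}).Reachable q b :=
      (hT.isTree.connected.preconnected.reachable_deleteEdges_or a b q).resolve_left
        fun h => hqA ⟨hqC, h.symm⟩
    have hcut : ¬(T.deleteEdges {s(a, b)}).Reachable p q := fun h =>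
      hT.isTree.isAcyclic.not_reachable_deleteEdges hab ((hap.trans h).trans hqb)
    exact (hT.weight_le_of_not_reachable hab hpq hcut).trans (hmin x hxC y hyC hxy)
  · exact hC.2 _ ⟨hpq, p, q, rfl, hpC, hqC⟩ x hxC y hyC hxy

/-- Cut along the lightest `T`-edge inside `C`. -/
lemma IsTreeCluster.exists_split (hT : IsMaxSpanTree G T w) (hC : IsTreeCluster G T w C)
    (hCn : C.Nontrivial) :
    ∃ A B, A ∪ B = C ∧ Disjoint A B ∧ IsTreeCluster G T w A ∧ IsTreeCluster G T w B := by
  have : Nontrivial C := hCn.coe_sort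
  obtain ⟨x, hx⟩ := hC.1.preconnected.exists_adj_of_nontrivial (Classical.arbitrary C)
  obtain ⟨⟨a, b⟩, ⟨ha, hb, hab⟩, hmin⟩ :=
    Set.exists_min_image {e : V × V | e.1 ∈ C ∧ e.2 ∈ C ∧ T.Adj e.1 e.2} (fun e => w s(e.1, e.2))
      (Set.toFinite _) ⟨(_, _), Subtype.property _, Subtype.property _, hx⟩
  have hmin' : ∀ x ∈ C, ∀ y ∈ C, T.Adj x y → w s(a, b) ≤ w s(x, y) :=
    fun x hx y hy hxy => hmin (x, y) ⟨hx, hy, hxy⟩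
  have hB := hC.cut_lightest hT hab.symm hb ha (Sym2.eq_swap (a := a) ▸ hmin')
  rw [Sym2.eq_swap] at hB
  have hside := hT.isTree.connected.preconnected.reachable_deleteEdges_or a b
  refine ⟨_, _, ?_, Set.disjoint_left.2 ?_, hC.cut_lightest hT hab ha hb hmin', hB⟩
  · exact Set.Subset.antisymm (Set.union_subset (Set.sep_subset _ _) (Set.sep_subset _ _))
      fun v hv => (hside v).imp (fun h => ⟨hv, h.symm⟩) fun h => ⟨hv, h.symm⟩
  · rintro v ⟨-, hav⟩ ⟨-, hbv⟩
    exact hT.isTree.isAcyclic.not_reachable_deleteEdges hab (hav.trans hbv.symm)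

end TreeClusters

section Partitions

variable [Fintype V] {G : SimpleGraph V} {C : Set V}

lemma IsPartitionOn.split {U A B : Set V} {𝒞 : Set (Set V)} (h : IsPartitionOn G U 𝒞)
    (hC : C ∈ 𝒞) (hAB : A ∪ B = C) (hdisj : Disjoint A B) (hA : (G.induce A).Connected)
    (hB : (G.induce B).Connected) :
    IsPartitionOn G U (insert A (insert B (𝒞 \ {C}))) ∧
      (insert A (insert B (𝒞 \ {C}))).ncard = 𝒞.ncard + 1 := by
  obtain ⟨hparts, hpw, hU⟩ := h
  obtain ⟨⟨a, ha⟩⟩ := hA.nonempty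
  obtain ⟨⟨b, hb⟩⟩ := hB.nonempty
  have hAC : A ⊆ C := hAB ▸ Set.subset_union_left
  have hBC : B ⊆ C := hAB ▸ Set.subset_union_right
  have hout : ∀ D ∈ 𝒞 \ {C}, Disjoint C D := fun D hD => hpw C hC D hD.1 (Ne.symm hD.2)
  have hA𝒞 : A ∉ insert B (𝒞 \ {C}) := by
    rintro (rfl | hD)
    · exact Set.disjoint_left.1 hdisj ha ha
    · exact Set.disjoint_left.1 (hout A hD) (hAC ha) ha
  have hB𝒞 : B ∉ 𝒞 \ {C} := fun hD => Set.disjoint_left.1 (hout B hD) (hBC hb) hb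
  refine ⟨⟨?_, ?_, ?_⟩, ?_⟩
  · rintro D (rfl | rfl | ⟨hD, -⟩)
    · exact ⟨⟨a, ha⟩, hAC.trans (hparts C hC).2.1, hA⟩
    · exact ⟨⟨b, hb⟩, hBC.trans (hparts C hC).2.1, hB⟩
    · exact hparts D hD
  · have hpw' : (𝒞 \ {C}).PairwiseDisjoint id := fun D hD D' hD' => hpw D hD.1 D' hD'.1
    refine (hpw'.insert fun D hD _ => (hout D hD).mono_left hBC).insert ?_
    rintro D (rfl | hD) -
    exacts [hdisj, (hout D hD).mono_left hAC]
  · rw [Set.sUnion_insert, Set.sUnion_insert, ← Set.union_assoc, hAB, ← Set.sUnion_insert,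
      Set.insert_sdiff_singleton, Set.insert_eq_of_mem hC, hU]
  · rw [Set.ncard_insert_of_notMem hA𝒞, Set.ncard_insert_of_notMem hB𝒞,
      Set.ncard_sdiff_singleton_add_one hC]

lemma exists_mem_nontrivial_of_ncard_lt {𝒞 : Set (Set V)} (h𝒞 : ⋃₀ 𝒞 = Set.univ)
    (hcard : 𝒞.ncard < Fintype.card V) : ∃ C ∈ 𝒞, C.Nontrivial := by
  by_contra! hsub
  choose f hf𝒞 hf using fun v : V => Set.mem_sUnion.1 (h𝒞 ▸ Set.mem_univ v)
  have hinj : f.Injective := fun u v huv => hsub _ (hf𝒞 u) (hf u) (huv ▸ hf v)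
  have := Set.ncard_le_ncard (Set.range_subset_iff.2 hf𝒞)
  rw [Set.ncard_range_of_injective hinj, Nat.card_eq_fintype_card] at this
  omega

lemma exists_isClustering_isTreeCluster {T : SimpleGraph V} {w : Sym2 V → ℝ}
    (hT : IsMaxSpanTree G T w) {k : ℕ} (hk1 : 1 ≤ k) (hkn : k ≤ Fintype.card V) :
    ∃ 𝒞, IsClustering G 𝒞 k ∧ ∀ C ∈ 𝒞, IsTreeCluster G T w C := by
  induction k, hk1 using Nat.le_induction with
  | base =>
    have : Nonempty V := hT.isTree.connected.nonempty
    have huniv : IsTreeCluster G T w Set.univ := isTreeCluster_univ hT.isTree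
    refine ⟨{Set.univ}, ⟨⟨?_, ?_, Set.sUnion_singleton _⟩, Set.ncard_singleton _⟩, ?_⟩
    · rintro _ rfl
      exact ⟨Set.univ_nonempty, subset_rfl, huniv.connected_induce hT.le⟩
    · rintro _ rfl _ rfl h
      exact absurd rfl h
    · rintro _ rfl
      exact huniv
  | succ k hk ih =>
    obtain ⟨𝒞, ⟨hpart, rfl⟩, h𝒞⟩ := ih (by omega)
    obtain ⟨C, hC, hCn⟩ := exists_mem_nontrivial_of_ncard_lt hpart.2.2 (by omega)
    obtain ⟨A, B, hAB, hdisj, hA, hB⟩ := (h𝒞 C hC).exists_split hT hCn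
    refine ⟨_, hpart.split hC hAB hdisj (hA.connected_induce hT.le) (hB.connected_induce hT.le), ?_⟩
    rintro D (rfl | rfl | ⟨hD, -⟩)
    exacts [hA, hB, h𝒞 D hD]

end Partitions

/-- there is a k-clustering with value ≤ 1; hence any optimal one has value ≤ 1. -/
theorem statement0 {V : Type*} [Fintype V] (G : SimpleGraph V) (w : Sym2 V → ℝ)
    (hconn : G.Connected) (hw : weightsOK G w) (k : ℕ) (hk1 : 1 ≤ k)
    (hkn : k ≤ Fintype.card V) :
    (∃ 𝒞 : Set (Set V), IsClustering G 𝒞 k ∧ ∀ C ∈ 𝒞, phi G w C ≤ 1) ∧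
    ∀ 𝒞 : Set (Set V), IsOptimal G w k 𝒞 → eval G w 𝒞 ≤ 1 := by
  obtain ⟨T, hT⟩ := exists_isMaxSpanTree hconn w
  obtain ⟨𝒞, h𝒞, hcl⟩ := exists_isClustering_isTreeCluster hT hk1 hkn
  have hphi : ∀ C ∈ 𝒞, phi G w C ≤ 1 := fun C hC => (hcl C hC).phi_le_one hw hT
  refine ⟨⟨𝒞, h𝒞, hphi⟩, fun 𝒟 hopt => (hopt.2 𝒞 h𝒞).trans ?_⟩
  exact Real.sSup_le (by rintro _ ⟨C, hC, rfl⟩; exact hphi C hC) zero_le_one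

end Bal
end
end

section
/- Let T = (V,E,w) be a weighted tree with weights in (0,1) and let C be a clustering of T (a partition of V into connected subtrees). Removing a single edge e of T splits T into two subtrees T_1, T_2; this induces clusterings A of T_1 and B of T_2 (each cluster of C intersected with the vertex set of T_i, the cluster containing an endpoint of e being split if e is internal to a cluster). Then Φ_{T_1}(A) ≤ Φ_T(C) and Φ_{T_2}(B) ≤ Φ_T(C), where Φ denotes the min-max cluster quality evaluated within the respective (sub)tree. -/
open scoped Classical
noncomputable section

namespace Bal

variable {V : Type*}

/-! Intersecting a cluster `C` with a component `S` of `T'` can only help. Every `T'`-edge leaving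
`C ∩ S` leaves `C` in `T`, since `S` is closed under `T'`-adjacency, so `max Out` does not grow.
If `C ∩ S` has two vertices, the unique tree path between them lies both in the connected set `C`
and in `T'`, so `C ∩ S` contains a `T'`-edge; all such edges are edges inside `C`, so `min E`
does not shrink. -/

section Subclusters

variable {T T' : SimpleGraph V} {w : Sym2 V → ℝ} {C : Set V}

open SimpleGraph

lemma _root_.SimpleGraph.IsAcyclic.support_subset_of_connected_induce (hT : T.IsAcyclic)
    (hC : (T.induce C).Connected) {a b : V} (ha : a ∈ C) (hb : b ∈ C) (p : T.Path a b) :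
    ∀ x ∈ p.1.support, x ∈ C := by
  obtain ⟨q⟩ := hC.preconnected ⟨a, ha⟩ ⟨b, hb⟩
  let q' : T.Walk a b := q.map (Embedding.induce C).toHom
  have hp : p = q'.toPath := (hT.subsingleton_path a b).elim _ _
  intro x hx
  rw [hp] at hx
  obtain ⟨y, -, rfl⟩ :=
    List.mem_map.1 <| (Walk.support_map _ q) ▸ q'.support_toPath_subset_support hx
  exact y.2

lemma _root_.SimpleGraph.IsAcyclic.exists_adj_mem_of_reachable (hT : T.IsAcyclic) (hle : T' ≤ T)
    (hC : (T.induce C).Connected) {a b : V} (ha : a ∈ C) (hb : b ∈ C) (hab : a ≠ b)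
    (hr : T'.Reachable a b) : ∃ c ∈ C, T'.Adj a c := by
  obtain ⟨q⟩ := hr
  let p : T'.Path a b := q.toPath
  have hnil : ¬ p.1.Nil := Walk.not_nil_of_ne hab
  refine ⟨p.1.snd, ?_, p.1.adj_snd hnil⟩
  exact hT.support_subset_of_connected_induce hC ha hb ⟨p.1.mapLe hle, p.2.mapLe hle⟩ _
    (by simp)

lemma mk_mem_inEdges {a b : V} (h : T.Adj a b) (ha : a ∈ C) (hb : b ∈ C) :
    s(a, b) ∈ inEdges T C :=
  ⟨h, fun x hx => by rcases Sym2.mem_iff.1 hx with rfl | rfl <;> assumption⟩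

lemma inEdges_nonempty_of_connected (hC : (T.induce C).Connected) (hs : ¬ C.Subsingleton) :
    (inEdges T C).Nonempty := by
  obtain ⟨a, ha, b, hb, hab⟩ := Set.not_subsingleton_iff.1 hs
  obtain ⟨p⟩ := hC.preconnected ⟨a, ha⟩ ⟨b, hb⟩
  have hnil : ¬ p.Nil := Walk.not_nil_of_ne fun h => hab (congrArg Subtype.val h)
  exact ⟨_, mk_mem_inEdges (p.adj_snd hnil) ha p.snd.2⟩

lemma inEdges_inter_reachable_nonempty (hT : T.IsAcyclic) (hle : T' ≤ T)
    (hC : (T.induce C).Connected) {r : V}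
    (hA : ¬ (C ∩ {x | T'.Reachable r x}).Subsingleton) :
    (inEdges T' (C ∩ {x | T'.Reachable r x})).Nonempty := by
  obtain ⟨a, ha, b, hb, hab⟩ := Set.not_subsingleton_iff.1 hA
  obtain ⟨c, hc, hac⟩ :=
    hT.exists_adj_mem_of_reachable hle hC ha.1 hb.1 hab (ha.2.symm.trans hb.2)
  exact ⟨_, mk_mem_inEdges hac ha ⟨hc, ha.2.trans hac.reachable⟩⟩

lemma outEdges_inter_reachable_subset (hle : T' ≤ T) (r : V) :
    outEdges T' (C ∩ {x | T'.Reachable r x}) ⊆ outEdges T C := by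
  rintro e ⟨he, a, b, rfl, ha, hb⟩
  exact ⟨edgeSet_mono hle he, a, b, rfl, ha.1,
    fun hbC => hb ⟨hbC, ha.2.trans (T'.mem_edgeSet.1 he).reachable⟩⟩

lemma inEdges_mono {C' : Set V} (hle : T' ≤ T) (hC : C' ⊆ C) :
    inEdges T' C' ⊆ inEdges T C :=
  fun _ ⟨he, hx⟩ => ⟨edgeSet_mono hle he, fun x hxe => hC (hx x hxe)⟩

lemma maxOut_nonneg (hw : weightsOK T w) (C : Set V) : 0 ≤ maxOut T w C :=
  Real.sSup_nonneg <| by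
    rintro _ ⟨e, he, rfl⟩
    exact (hw e he.1).1.le

variable [Finite V]

lemma maxOut_le_maxOut {C' : Set V} (hw : weightsOK T w) (h : outEdges T' C' ⊆ outEdges T C) :
    maxOut T' w C' ≤ maxOut T w C := by
  rcases (outEdges T' C').eq_empty_or_nonempty with hempty | hne
  · rw [maxOut, hempty, Set.image_empty, Real.sSup_empty]
    exact maxOut_nonneg hw C
  · exact csSup_le_csSup (Set.toFinite _).bddAbove (hne.image w) (Set.image_mono h)

lemma minIn_le_one (hw : weightsOK T w) (C : Set V) : minIn T w C ≤ 1 := by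
  unfold minIn
  split_ifs
  · exact le_rfl
  · rcases (w '' inEdges T C).eq_empty_or_nonempty with hempty | hne
    · rw [hempty, Real.sInf_empty]
      exact zero_le_one
    · obtain ⟨e, he, heq⟩ := hne.csInf_mem (Set.toFinite _)
      exact heq ▸ (hw e he.1).2.le

lemma minIn_pos (hw : weightsOK T w) (hC : (T.induce C).Connected) : 0 < minIn T w C := by
  unfold minIn
  split_ifs with hs
  · exact zero_lt_one
  · obtain ⟨e, he, heq⟩ := ((inEdges_nonempty_of_connected hC hs).image w).csInf_mem
      (Set.toFinite _)
    exact heq ▸ (hw e he.1).1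

lemma minIn_le_minIn {C' : Set V} (hw : weightsOK T w) (hC : C' ⊆ C)
    (hne : ¬ C'.Subsingleton → (inEdges T' C').Nonempty) (h : inEdges T' C' ⊆ inEdges T C) :
    minIn T w C ≤ minIn T' w C' := by
  by_cases hs : C'.Subsingleton
  · rw [show minIn T' w C' = 1 from if_pos hs]
    exact minIn_le_one hw C
  · rw [minIn, minIn, if_neg hs, if_neg fun h => hs (h.anti hC)]
    exact csInf_le_csInf (Set.toFinite _).bddBelow ((hne hs).image w) (Set.image_mono h)

lemma phiT_inter_reachable_le (hT : T.IsAcyclic) (hw : weightsOK T w) (hle : T' ≤ T)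
    (hC : (T.induce C).Connected) (r : V) :
    phiT T' w (C ∩ {x | T'.Reachable r x}) ≤ phiT T w C :=
  div_le_div₀ (maxOut_nonneg hw C) (maxOut_le_maxOut hw (outEdges_inter_reachable_subset hle r))
    (minIn_pos hw hC) (minIn_le_minIn hw Set.inter_subset_left
      (inEdges_inter_reachable_nonempty hT hle hC) (inEdges_mono hle Set.inter_subset_left))

lemma evalT_nonneg (hw : weightsOK T w) {𝒞 : Set (Set V)}
    (h𝒞 : ∀ C ∈ 𝒞, (T.induce C).Connected) : 0 ≤ evalT T w 𝒞 :=
  Real.sSup_nonneg <| by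
    rintro _ ⟨C, hC, rfl⟩
    exact div_nonneg (maxOut_nonneg hw C) (minIn_pos hw (h𝒞 C hC)).le

lemma evalT_inter_reachable_le (hT : T.IsAcyclic) (hw : weightsOK T w) (hle : T' ≤ T)
    {𝒞 : Set (Set V)} (h𝒞 : ∀ C ∈ 𝒞, (T.induce C).Connected) (r : V) :
    evalT T' w {A | ∃ C ∈ 𝒞, A = C ∩ {x | T'.Reachable r x} ∧
      (C ∩ {x | T'.Reachable r x}).Nonempty} ≤ evalT T w 𝒞 := by
  refine Real.sSup_le ?_ (evalT_nonneg hw h𝒞)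
  rintro _ ⟨_, ⟨C, hC, rfl, -⟩, rfl⟩
  exact (phiT_inter_reachable_le hT hw hle (h𝒞 C hC) r).trans
    (le_csSup ((Set.toFinite 𝒞).image _).bddAbove (Set.mem_image_of_mem _ hC))

end Subclusters

theorem statement4_general {V : Type*} [Fintype V] (T : SimpleGraph V) (w : Sym2 V → ℝ)
    (hT : T.IsTree) (hw : weightsOK T w) (𝒞 : Set (Set V))
    (h𝒞 : IsPartitionOn T Set.univ 𝒞) (u v : V) :
    let T' := T.deleteEdges {s(u, v)}
    let V1 : Set V := {x | T'.Reachable u x}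
    let V2 : Set V := {x | T'.Reachable v x}
    let 𝒜 : Set (Set V) := {A | ∃ C ∈ 𝒞, A = C ∩ V1 ∧ (C ∩ V1).Nonempty}
    let ℬ : Set (Set V) := {B | ∃ C ∈ 𝒞, B = C ∩ V2 ∧ (C ∩ V2).Nonempty}
    evalT T' w 𝒜 ≤ evalT T w 𝒞 ∧ evalT T' w ℬ ≤ evalT T w 𝒞 := by
  intro T' V1 V2 𝒜 ℬ
  have hle : T' ≤ T := T.deleteEdges_le _
  have hconn : ∀ C ∈ 𝒞, (T.induce C).Connected := fun C hC => (h𝒞.1 C hC).2.2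
  exact ⟨evalT_inter_reachable_le hT.isAcyclic hw hle hconn u,
    evalT_inter_reachable_le hT.isAcyclic hw hle hconn v⟩

/-- removing one edge of a tree induces, on each of the two subtrees,
a clustering whose evaluation is at most that of the original clustering. -/
theorem statement4 {V : Type*} [Fintype V] (T : SimpleGraph V) (w : Sym2 V → ℝ)
    (hT : T.IsTree) (hw : weightsOK T w) (𝒞 : Set (Set V))
    (h𝒞 : IsPartitionOn T Set.univ 𝒞) (u v : V) (huv : T.Adj u v) :
    let T' := T.deleteEdges {s(u, v)}
    let V1 : Set V := {x | T'.Reachable u x}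
    let V2 : Set V := {x | T'.Reachable v x}
    let 𝒜 : Set (Set V) := {A | ∃ C ∈ 𝒞, A = C ∩ V1 ∧ (C ∩ V1).Nonempty}
    let ℬ : Set (Set V) := {B | ∃ C ∈ 𝒞, B = C ∩ V2 ∧ (C ∩ V2).Nonempty}
    evalT T' w 𝒜 ≤ evalT T w 𝒞 ∧ evalT T' w ℬ ≤ evalT T w 𝒞 :=
  statement4_general T w hT hw 𝒞 h𝒞 u v

end Bal
end
end

section
/- Let S be a weighted subtree rooted at v with edge weights in (0,1), and let C and C' be two clusterings of S such that the head clusters (clusters containing v) satisfy min(E(h(C))) = min(E(h(C'))) = μ. If Φ_S(C) < Φ_S(C') ≤ 1, then max(Out_S(h(C))) ≤ max(Out_S(h(C'))). -/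
open scoped Classical
noncomputable section

namespace Bal

variable {V : Type*}

/-- Along a walk from a vertex satisfying `P` to one not satisfying `P`,
there is an edge crossing from `P` to `¬P`. -/
private lemma crossing {α : Type*} {G : SimpleGraph α} {P : α → Prop} :
    ∀ {u x : α}, G.Walk u x → P u → ¬ P x → ∃ p q, G.Adj p q ∧ P p ∧ ¬ P q := by
  intro u x wlk
  induction wlk with
  | nil => intro h h'; exact absurd h h'
  | @cons a b c hadj _ ih =>
      intro ha hc
      by_cases hb : P b
      · exact ih hb hc
      · exact ⟨a, b, hadj, ha, hb⟩

/-- monotonicity lemma: same head-cluster minimum `μ` and strictly better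
evaluation (both ≤ 1) imply no larger head-outgoing maximum. -/
theorem statement5 {V : Type*} [Fintype V] (S : SimpleGraph V) (w : Sym2 V → ℝ)
    (hS : S.IsTree) (hw : weightsOK S w) (v : V)
    (𝒞 𝒞' : Set (Set V)) (h𝒞 : IsPartitionOn S Set.univ 𝒞)
    (h𝒞' : IsPartitionOn S Set.univ 𝒞')
    (hC : Set V) (hhC : hC ∈ 𝒞) (hvC : v ∈ hC)
    (hC' : Set V) (hhC' : hC' ∈ 𝒞') (hvC' : v ∈ hC')
    (μ : ℝ) (hμ : minIn S w hC = μ) (hμ' : minIn S w hC' = μ)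
    (hlt : evalT S w 𝒞 < evalT S w 𝒞') (hle : evalT S w 𝒞' ≤ 1) :
    maxOut S w hC ≤ maxOut S w hC' := by
  classical
  have hfin : ∀ s : Set (Sym2 V), (w '' s).Finite := fun s => s.toFinite.image w
  -- maxOut is always nonnegative
  have key0 : ∀ C : Set V, 0 ≤ maxOut S w C := by
    intro C
    rcases (w '' outEdges S C).eq_empty_or_nonempty with h | ⟨x, e, he, hxe⟩
    · rw [maxOut, h, Real.sSup_empty]
    · calc (0:ℝ) ≤ w e := (hw e he.1).1.le
        _ ≤ maxOut S w C := le_csSup (hfin _).bddAbove ⟨e, he, rfl⟩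
  -- head cluster of 𝒞 is connected
  obtain ⟨hprop, _, _⟩ := h𝒞
  obtain ⟨_, _, hCconn⟩ := hprop hC hhC
  -- inEdges of a connected non-subsingleton cluster are nonempty
  have hinNE : ∀ C : Set V, (S.induce C).Connected → ¬ C.Subsingleton →
      (inEdges S C).Nonempty := by
    intro C hconn hss
    rw [Set.not_subsingleton_iff] at hss
    obtain ⟨a, ha, b, hb, hab⟩ := hss
    obtain ⟨wk⟩ := hconn.preconnected ⟨a, ha⟩ ⟨b, hb⟩
    obtain ⟨p, q, hadj, -, -⟩ :=
      crossing (P := fun z : C => (z : V) = a) wk rfl (by simpa using fun h => hab h.symm)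
    have hadj' : S.Adj ↑p ↑q := hadj
    refine ⟨s(↑p, ↑q), S.mem_edgeSet.mpr hadj', ?_⟩
    · intro x hx
      rcases Sym2.mem_iff.mp hx with rfl | rfl
      exacts [p.2, q.2]
  -- μ is positive
  have hμpos : 0 < μ := by
    rw [← hμ, minIn]
    split_ifs with h
    · norm_num
    · have hne := hinNE hC hCconn h
      obtain ⟨e, he, heq⟩ := Set.Nonempty.csInf_mem (hne.image w) (hfin _)
      rw [← heq]
      exact (hw e he.1).1
  -- phiT of a member is at most evalT
  have hphile : phiT S w hC ≤ evalT S w 𝒞 :=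
    le_csSup ((Set.toFinite 𝒞).image _).bddAbove ⟨hC, hhC, rfl⟩
  have hmμ : maxOut S w hC < μ := by
    rw [phiT, hμ] at hphile
    have h1 : maxOut S w hC / μ < 1 := lt_of_le_of_lt hphile (lt_of_lt_of_le hlt hle)
    exact (div_lt_one hμpos).mp h1
  by_contra hcon
  push_neg at hcon
  -- outEdges of hC is nonempty
  have hNE : (outEdges S hC).Nonempty := by
    by_contra h
    rw [Set.not_nonempty_iff_eq_empty] at h
    have h0 : maxOut S w hC = 0 := by rw [maxOut, h, Set.image_empty, Real.sSup_empty]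
    exact absurd hcon (not_lt.mpr (h0 ▸ key0 hC'))
  obtain ⟨e, he, hew⟩ := Set.Nonempty.csSup_mem ((hNE).image w) (hfin _)
  obtain ⟨heS, a, b, heq, ha, hb⟩ := he
  have hew' : maxOut S w hC = w e := hew.symm
  -- hC ⊆ hC'
  have hsub' : hC ⊆ hC' := by
    intro x hx
    by_contra hx'
    obtain ⟨wk⟩ := hCconn.preconnected ⟨v, hvC⟩ ⟨x, hx⟩
    obtain ⟨p, q, hadj, hp, hq⟩ :=
      crossing (P := fun z : hC => (z : V) ∈ hC') wk hvC' hx'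
    have hadj' : S.Adj ↑p ↑q := hadj
    have hin : s((p:V), (q:V)) ∈ inEdges S hC := by
      refine ⟨S.mem_edgeSet.mpr hadj', ?_⟩
      intro y hy
      rcases Sym2.mem_iff.mp hy with rfl | rfl
      exacts [p.2, q.2]
    have hout : s((p:V), (q:V)) ∈ outEdges S hC' :=
      ⟨S.mem_edgeSet.mpr hadj', ↑p, ↑q, rfl, hp, hq⟩
    have h1 : μ ≤ w s((p:V), (q:V)) := by
      rw [← hμ, minIn]
      split_ifs with hss
      · exact absurd (Subtype.ext (hss p.2 q.2) : p = q) hadj.ne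
      · exact csInf_le (hfin _).bddBelow ⟨_, hin, rfl⟩
    have h2 : w s((p:V), (q:V)) ≤ maxOut S w hC' :=
      le_csSup (hfin _).bddAbove ⟨_, hout, rfl⟩
    linarith
  have haC' : a ∈ hC' := hsub' ha
  have hAdjab : S.Adj a b := by
    rw [heq] at heS
    exact S.mem_edgeSet.mp heS
  by_cases hbC' : b ∈ hC'
  · -- e is an in-edge of hC', so w e ≥ μ > maxOut hC = w e, contradiction
    have hin : e ∈ inEdges S hC' := by
      refine ⟨heS, ?_⟩
      rw [heq]
      intro y hy
      rcases Sym2.mem_iff.mp hy with rfl | rfl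
      exacts [haC', hbC']
    have hss' : ¬ hC'.Subsingleton := fun hss =>
      hAdjab.ne (hss haC' hbC')
    have h1 : μ ≤ w e := by
      rw [← hμ', minIn, if_neg hss']
      exact csInf_le (hfin _).bddBelow ⟨e, hin, rfl⟩
    linarith
  · -- e is an out-edge of hC', so maxOut hC' ≥ w e = maxOut hC, contradiction
    have hout : e ∈ outEdges S hC' := ⟨heS, a, b, heq, haC', hbC'⟩
    have h1 : w e ≤ maxOut S w hC' := le_csSup (hfin _).bddAbove ⟨e, hout, rfl⟩
    linarith

end Bal
end
end

section
/- Let G = (V,E,w) be a connected weighted graph with weights in (0,1), and suppose C* is an optimal clustering of G minimizing the min-max quality Φ over all partitions into k ≥ 2 connected clusters. If Φ(C*) < 1, then every cluster of C* spans a connected subtree of any maximum spanning tree of G. -/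
open scoped Classical
noncomputable section

namespace Bal

variable {V : Type*}

/-! ### Auxiliary lemmas -/

open SimpleGraph in
/-- If the two endpoints of a deleted edge remain reachable, any walk can be patched. -/
lemma patch_reachable {α : Type*} {G : SimpleGraph α} {x y : α}
    (hr : (G.deleteEdges {s(x, y)}).Reachable x y) :
    ∀ {u v : α}, G.Walk u v → (G.deleteEdges {s(x, y)}).Reachable u v := by
  intro u v p
  induction p with
  | nil => exact Reachable.refl _
  | @cons u c v h p ih =>
    refine Reachable.trans ?_ ih
    by_cases he : s(u, c) = s(x, y)
    · rw [Sym2.eq_iff] at he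
      rcases he with ⟨rfl, rfl⟩ | ⟨rfl, rfl⟩
      · exact hr
      · exact hr.symm
    · exact (SimpleGraph.deleteEdges_adj.2 ⟨h, he⟩).reachable

open SimpleGraph in
lemma connected_deleteEdges_of_not_isBridge {α : Type*} {G : SimpleGraph α} {x y : α}
    (hc : G.Connected) (hxy : G.Adj x y) (hb : ¬G.IsBridge s(x, y)) :
    (G.deleteEdges {s(x, y)}).Connected := by
  rw [SimpleGraph.isBridge_iff] at hb
  push_neg at hb
  have hr : (G.deleteEdges {s(x, y)}).Reachable x y := hb
  have hne : Nonempty α := hc.nonempty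
  rw [SimpleGraph.connected_iff]
  exact ⟨fun u v => patch_reachable hr ((hc u v).some), hne⟩

open SimpleGraph in
/-- Every finite connected graph has a spanning tree. -/
lemma exists_spanning_tree {α : Type*} [Fintype α] :
    ∀ (n : ℕ) (G : SimpleGraph α), G.edgeSet.ncard ≤ n → G.Connected →
      ∃ T, T ≤ G ∧ T.IsTree := by
  intro n
  induction n with
  | zero =>
    intro G hn hc
    by_cases ha : G.IsAcyclic
    · exact ⟨G, le_rfl, hc, ha⟩
    · rw [SimpleGraph.isAcyclic_iff_forall_adj_isBridge] at ha
      push_neg at ha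
      obtain ⟨x, y, hxy, -⟩ := ha
      have : s(x, y) ∈ G.edgeSet := hxy
      have hpos : 0 < G.edgeSet.ncard :=
        (Set.ncard_pos (Set.toFinite _)).2 ⟨_, this⟩
      omega
  | succ m ih =>
    intro G hn hc
    by_cases ha : G.IsAcyclic
    · exact ⟨G, le_rfl, hc, ha⟩
    · rw [SimpleGraph.isAcyclic_iff_forall_adj_isBridge] at ha
      push_neg at ha
      obtain ⟨x, y, hxy, hb⟩ := ha
      have hc' : (G.deleteEdges {s(x, y)}).Connected :=
        connected_deleteEdges_of_not_isBridge hc hxy hb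
      have hcard : (G.deleteEdges {s(x, y)}).edgeSet.ncard ≤ m := by
        rw [SimpleGraph.edgeSet_deleteEdges]
        have h1 : (G.edgeSet \ {s(x, y)}).ncard + 1 = G.edgeSet.ncard :=
          Set.ncard_diff_singleton_add_one hxy (Set.toFinite _)
        omega
      obtain ⟨T, hT1, hT2⟩ := ih _ hcard hc'
      exact ⟨T, hT1.trans (SimpleGraph.deleteEdges_le _), hT2⟩

open SimpleGraph in
/-- Every finite connected graph has a maximum spanning tree. -/
lemma exists_maxSpanTree {α : Type*} [Fintype α] (G : SimpleGraph α) (hc : G.Connected)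
    (w : Sym2 α → ℝ) : ∃ T : SimpleGraph α, IsMaxSpanTree G T w := by
  have hfin : {H : SimpleGraph α | H ≤ G ∧ H.IsTree}.Finite := Set.toFinite _
  have hne : {H : SimpleGraph α | H ≤ G ∧ H.IsTree}.Nonempty := by
    obtain ⟨T, hT1, hT2⟩ := exists_spanning_tree (G.edgeSet.ncard) G le_rfl hc
    exact ⟨T, hT1, hT2⟩
  obtain ⟨T, hT, hmax⟩ := Set.exists_max_image _ (fun H => totalWeight H w) hfin hne
  exact ⟨T, hT.1, hT.2, fun T' h1 h2 => hmax T' ⟨h1, h2⟩⟩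

open SimpleGraph in
lemma totalWeight_eq_sum {α : Type*} [Fintype α] (H : SimpleGraph α) (w : Sym2 α → ℝ)
    [Fintype H.edgeSet] :
    totalWeight H w = ∑ e ∈ H.edgeFinset, w e := by
  rw [totalWeight, ← Finset.sum_filter]
  congr 1
  ext e
  simp [SimpleGraph.mem_edgeFinset]

open SimpleGraph in
/-- A walk between two vertices of `C` lying in different components of the induced
graph on `C` must use an edge leaving `C`. -/
lemma exists_crossing {α : Type*} {T : SimpleGraph α} {C : Set α} :
    ∀ {a b : α} (p : T.Walk a b) (ha : a ∈ C) (hb : b ∈ C),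
      ¬(T.induce C).Reachable ⟨a, ha⟩ ⟨b, hb⟩ →
      ∃ x y, x ∈ C ∧ y ∉ C ∧ s(x, y) ∈ p.edges := by
  intro a b p
  induction p with
  | nil => intro ha hb h; exact absurd (Reachable.refl _) h
  | @cons a c b h p ih =>
    intro ha hb hr
    by_cases hcC : c ∈ C
    · have hadj : (T.induce C).Adj ⟨a, ha⟩ ⟨c, hcC⟩ := by simpa using h
      have hr' : ¬(T.induce C).Reachable ⟨c, hcC⟩ ⟨b, hb⟩ := fun hcb =>
        hr (hadj.reachable.trans hcb)
      obtain ⟨x, y, hx, hy, hm⟩ := ih hcC hb hr'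
      exact ⟨x, y, hx, hy, by simp [hm]⟩
    · exact ⟨a, c, ha, hcC, by simp⟩

open SimpleGraph in
/-- Truncation: after deleting one edge, every vertex can still reach one of its endpoints. -/
lemma reach_avoid_aux {α : Type*} {T : SimpleGraph α} {x y : α} :
    ∀ {v t : α}, T.Walk v t → t = x →
      (T.deleteEdges {s(x, y)}).Reachable v x ∨ (T.deleteEdges {s(x, y)}).Reachable v y := by
  intro v t p
  induction p with
  | nil => rintro rfl; exact Or.inl (Reachable.refl _)
  | @cons v c _ h p ih =>
    intro ht
    by_cases he : s(v, c) = s(x, y)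
    · rw [Sym2.eq_iff] at he
      rcases he with ⟨rfl, rfl⟩ | ⟨rfl, rfl⟩
      · exact Or.inl (Reachable.refl _)
      · exact Or.inr (Reachable.refl _)
    · have hadj : (T.deleteEdges {s(x, y)}).Adj v c := SimpleGraph.deleteEdges_adj.2 ⟨h, he⟩
      rcases ih ht with h1 | h1
      · exact Or.inl (hadj.reachable.trans h1)
      · exact Or.inr (hadj.reachable.trans h1)

open SimpleGraph in
/-- Truncation: after deleting one edge, every vertex can still reach one of its endpoints. -/
lemma reach_avoid {α : Type*} {T : SimpleGraph α} {x y : α} {v : α} (p : T.Walk v x) :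
    (T.deleteEdges {s(x, y)}).Reachable v x ∨ (T.deleteEdges {s(x, y)}).Reachable v y :=
  reach_avoid_aux p rfl

open SimpleGraph in
/-- In a tree, removing an edge of the (unique) path between `a` and `b` separates them. -/
lemma sep_of_mem_path_edges {α : Type*} {T : SimpleGraph α} (hT : T.IsTree) {a b : α}
    (p : T.Walk a b) (hp : p.IsPath) {f : Sym2 α} (hf : f ∈ p.edges) :
    ¬(T.deleteEdges {f}).Reachable a b := by
  rintro ⟨q⟩
  have hq' : (q.mapLe (SimpleGraph.deleteEdges_le _)).toPath.val.IsPath :=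
    (q.mapLe (SimpleGraph.deleteEdges_le _)).toPath.property
  have huniq := (hT.existsUnique_path a b).unique hp hq'
  rw [huniq] at hf
  have hf2 : f ∈ (q.mapLe (SimpleGraph.deleteEdges_le _)).edges :=
    SimpleGraph.Walk.edges_toPath_subset _ hf
  have hf3 : f ∈ q.edges := by
    rw [SimpleGraph.Walk.mapLe] at hf2
    rw [SimpleGraph.Walk.edges_map] at hf2
    simpa using hf2
  have := q.edges_subset_edgeSet hf3
  rw [SimpleGraph.edgeSet_deleteEdges] at this
  exact this.2 rfl

open SimpleGraph in
/-- Along a walk whose endpoints are not `K`-reachable, some edge joins two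
`K`-unreachable vertices. -/
lemma exists_adj_not_reachable {β : Type*} {H K : SimpleGraph β} :
    ∀ {u v : β}, H.Walk u v → ¬K.Reachable u v →
      ∃ x y, H.Adj x y ∧ ¬K.Reachable x y := by
  intro u v p
  induction p with
  | nil => intro h; exact absurd (Reachable.refl _) h
  | @cons u c v h p ih =>
    intro hr
    by_cases huc : K.Reachable u c
    · obtain ⟨x, y, h1, h2⟩ := ih fun hcb => hr (huc.trans hcb)
      exact ⟨x, y, h1, h2⟩
    · exact ⟨u, c, h, huc⟩

open SimpleGraph in
/-- The exchange argument: if `a b ∈ C` are adjacent in `G` but lie in distinct components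
of `T.induce C` for a maximum spanning tree `T`, then some outgoing edge of `C` has weight
at least `w s(a,b)`. -/
lemma exchange {α : Type*} [Fintype α] (G T : SimpleGraph α) (w : Sym2 α → ℝ)
    (hmax : IsMaxSpanTree G T w) {C : Set α} {a b : α} (ha : a ∈ C) (hb : b ∈ C)
    (hab : G.Adj a b) (hnr : ¬(T.induce C).Reachable ⟨a, ha⟩ ⟨b, hb⟩) :
    ∃ f ∈ outEdges G C, w s(a, b) ≤ w f := by
  obtain ⟨hTG, hTtree, hTmax⟩ := hmax
  have hTconn : T.Connected := hTtree.isConnected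
  -- `e` is not an edge of `T`
  have heT : s(a, b) ∉ T.edgeSet := by
    intro h
    exact hnr (SimpleGraph.Adj.reachable (by simpa using (h : T.Adj a b)))
  -- a path from `a` to `b` in `T`
  obtain ⟨p₀⟩ := hTconn a b
  set p : T.Walk a b := p₀.toPath.val with hp_def
  have hp : p.IsPath := p₀.toPath.property
  -- the crossing edge `f = s(x,y)`
  obtain ⟨x, y, hxC, hyC, hfp⟩ := exists_crossing p ha hb hnr
  have hfT : s(x, y) ∈ T.edgeSet := p.edges_subset_edgeSet hfp
  have hfG : s(x, y) ∈ G.edgeSet := SimpleGraph.edgeSet_mono hTG hfT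
  refine ⟨s(x, y), ⟨hfG, x, y, rfl, hxC, hyC⟩, ?_⟩
  have hef : s(a, b) ≠ s(x, y) := by
    intro h
    rw [Sym2.eq_iff] at h
    rcases h with ⟨rfl, rfl⟩ | ⟨rfl, rfl⟩
    · exact hyC hb
    · exact hyC ha
  -- separation
  have hsep : ¬(T.deleteEdges {s(x, y)}).Reachable a b :=
    sep_of_mem_path_edges hTtree p hp hfp
  have hax := reach_avoid (x := x) (y := y) (hTconn a x).some
  have hbx := reach_avoid (x := x) (y := y) (hTconn b x).some
  -- the exchanged graph
  set T' : SimpleGraph α := T.deleteEdges {s(x, y)} ⊔ fromEdgeSet {s(a, b)} with hT'def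
  have hle : T.deleteEdges {s(x, y)} ≤ T' := le_sup_left
  have hT'ab : T'.Adj a b := by
    rw [hT'def, SimpleGraph.sup_adj]
    exact Or.inr (by simp [hab.ne])
  -- connectivity of T'
  have hxa : T'.Reachable x a ∧ T'.Reachable y a := by
    rcases hax with h1 | h1 <;> rcases hbx with h2 | h2
    · exact absurd (h1.trans h2.symm) hsep
    · exact ⟨(h1.symm.mono hle), ((h2.symm.mono hle).trans hT'ab.symm.reachable)⟩
    · exact ⟨((h2.symm.mono hle).trans hT'ab.symm.reachable), (h1.symm.mono hle)⟩
    · exact absurd (h1.trans h2.symm) hsep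
  have hT'conn : T'.Connected := by
    have hne : Nonempty α := hTconn.nonempty
    rw [SimpleGraph.connected_iff]
    refine ⟨fun u v => ?_, hne⟩
    have key : ∀ z : α, T'.Reachable z a := by
      intro z
      rcases reach_avoid (x := x) (y := y) (hTconn z x).some with h1 | h1
      · exact (h1.mono hle).trans hxa.1
      · exact (h1.mono hle).trans hxa.2
    exact (key u).trans (key v).symm
  have hT'le : T' ≤ G := by
    refine sup_le ((SimpleGraph.deleteEdges_le _).trans hTG) ?_
    intro u v huv
    rw [SimpleGraph.fromEdgeSet_adj] at huv
    rcases huv with ⟨h1, -⟩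
    rw [Set.mem_singleton_iff] at h1
    rw [← SimpleGraph.mem_edgeSet, h1]
    exact hab
  -- edge set of T'
  have hE : T'.edgeSet = insert s(a, b) (T.edgeSet \ {s(x, y)}) := by
    rw [hT'def, SimpleGraph.edgeSet_sup, SimpleGraph.edgeSet_deleteEdges,
      SimpleGraph.edgeSet_fromEdgeSet]
    have : ({s(a, b)} : Set (Sym2 α)) \ Sym2.diagSet = {s(a, b)} := by
      ext e0
      simp only [Set.mem_diff, Set.mem_singleton_iff, Sym2.mem_diagSet]
      constructor
      · rintro ⟨h1, -⟩; exact h1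
      · rintro rfl; exact ⟨rfl, by simp [hab.ne]⟩
    rw [this, Set.union_comm, Set.insert_eq]
  have heT' : s(a, b) ∉ T.edgeSet \ {s(x, y)} := fun h => heT h.1
  have hcardT' : T'.edgeSet.ncard = T.edgeSet.ncard := by
    rw [hE, Set.ncard_insert_of_notMem heT' (Set.toFinite _)]
    have := Set.ncard_diff_singleton_add_one hfT (Set.toFinite T.edgeSet)
    omega
  -- T' is a tree
  have hT'tree : T'.IsTree := by
    obtain ⟨T'', hT''le, hT''tree⟩ := exists_spanning_tree (T'.edgeSet.ncard) T' le_rfl hT'conn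
    have h1 : T''.edgeFinset.card + 1 = Fintype.card α := hT''tree.card_edgeFinset
    have h2 : T.edgeFinset.card + 1 = Fintype.card α := hTtree.card_edgeFinset
    have hc1 : T''.edgeSet.ncard = T''.edgeFinset.card := by
      rw [← Set.ncard_coe_finset, SimpleGraph.coe_edgeFinset]
    have hc2 : T.edgeSet.ncard = T.edgeFinset.card := by
      rw [← Set.ncard_coe_finset, SimpleGraph.coe_edgeFinset]
    have h3 : T''.edgeSet.ncard = T.edgeSet.ncard := by omega
    have h4 : T''.edgeSet = T'.edgeSet := by
      apply Set.eq_of_subset_of_ncard_le (SimpleGraph.edgeSet_mono hT''le) _ (Set.toFinite _)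
      rw [h3, hcardT']
    have : T'' = T' := SimpleGraph.edgeSet_inj.1 h4
    rwa [this] at hT''tree
  -- weight comparison
  have hwle : totalWeight T' w ≤ totalWeight T w := hTmax T' hT'le hT'tree
  have hEF : T'.edgeFinset = insert s(a, b) (T.edgeFinset.erase s(x, y)) := by
    ext e
    simp only [SimpleGraph.mem_edgeFinset, hE, Set.mem_insert_iff, Finset.mem_insert,
      Finset.mem_erase, Set.mem_diff, Set.mem_singleton_iff]
    tauto
  have hsum' : totalWeight T' w = w s(a, b) + (totalWeight T w - w s(x, y)) := by
    rw [totalWeight_eq_sum, totalWeight_eq_sum, hEF, Finset.sum_insert, Finset.sum_erase_eq_sub]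
    · rwa [SimpleGraph.mem_edgeFinset]
    · intro h
      exact heT (SimpleGraph.mem_edgeFinset.1 (Finset.mem_of_mem_erase h))
  rw [hsum'] at hwle
  linarith

/-- if the optimal evaluation is < 1, every optimal cluster spans a connected
subtree of every maximum spanning tree of `G`. -/
theorem statement12 {V : Type*} [Fintype V] (G : SimpleGraph V) (w : Sym2 V → ℝ)
    (hconn : G.Connected) (hw : weightsOK G w) (k : ℕ) (hk : 2 ≤ k)
    (𝒞 : Set (Set V)) (hopt : IsOptimal G w k 𝒞) (hlt : eval G w 𝒞 < 1) :
    ∀ T : SimpleGraph V, IsMaxSpanTree G T w → ∀ C ∈ 𝒞, (T.induce C).Connected := by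
  intro T hT C hC
  by_contra hnc
  obtain ⟨hCne, -, hGCconn⟩ := hopt.1.1.1 C hC
  -- `C` is not a subsingleton
  have hns : ¬C.Subsingleton := by
    intro hs
    apply hnc
    have hne2 : Nonempty C := hCne.to_subtype
    have hsub : Subsingleton C := hs.coe_sort
    rw [SimpleGraph.connected_iff]
    exact ⟨fun u v => by rw [Subsingleton.elim u v], hne2⟩
  -- existence of a maximum spanning tree of `G.induce C`
  have hx : ∃ T_C : SimpleGraph C, IsMaxSpanTree (G.induce C) T_C (subWeight w C) :=
    exists_maxSpanTree (G.induce C) hGCconn (subWeight w C)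
  set T_C := hx.choose with hTC_def
  have hTCspec : IsMaxSpanTree (G.induce C) T_C (subWeight w C) := hx.choose_spec
  -- two vertices of `C` not connected in `T.induce C`
  have : Nonempty C := hCne.to_subtype
  have hnp : ¬(T.induce C).Preconnected := fun h =>
    hnc ((SimpleGraph.connected_iff _).2 ⟨h, this⟩)
  rw [SimpleGraph.Preconnected] at hnp
  push_neg at hnp
  obtain ⟨u₀, v₀, hnr₀⟩ := hnp
  -- an edge of `T_C` between two components of `T.induce C`
  obtain ⟨u, v, huv, hnr⟩ :=
    exists_adj_not_reachable ((hTCspec.2.1.isConnected u₀ v₀)).some hnr₀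
  have hGuv : G.Adj (↑u) (↑v) := by
    have := hTCspec.1 huv
    simpa using this
  -- the exchange lemma
  have hnr' : ¬(T.induce C).Reachable ⟨↑u, u.2⟩ ⟨↑v, v.2⟩ := hnr
  obtain ⟨f, hfout, hwf⟩ := exchange G T w hT u.2 v.2 hGuv hnr'
  -- positivity facts
  set e : Sym2 V := s(↑u, ↑v) with he_def
  have heG : e ∈ G.edgeSet := hGuv
  have hwe_pos : 0 < w e := (hw e heG).1
  -- the edge `s(u,v)` of `T_C`, seen through `subWeight`
  have hmemTC : s(u, v) ∈ T_C.edgeSet := huv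
  have hsw : subWeight w C s(u, v) = w e := by
    rw [subWeight]
    congr 1
  -- bound minMST ≤ w e
  set S : Set ℝ := subWeight w C '' T_C.edgeSet with hS_def
  have hSfin : S.Finite := Set.Finite.image _ (Set.toFinite _)
  have hSne : S.Nonempty := ⟨_, ⟨s(u, v), hmemTC, hsw⟩⟩
  have hminMST : minMST G w C = sInf S := by
    rw [minMST, if_neg hns, dif_pos hx]
  have hmin_le : minMST G w C ≤ w e := by
    rw [hminMST]
    exact csInf_le hSfin.bddBelow ⟨s(u, v), hmemTC, hsw⟩
  have hSpos : ∀ r ∈ S, 0 < r := by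
    rintro r ⟨e₀, he₀, rfl⟩
    induction e₀ with
    | _ p q =>
      have hadj : T_C.Adj p q := he₀
      have : G.Adj (↑p) (↑q) := by simpa using hTCspec.1 hadj
      have : s(↑p, ↑q) ∈ G.edgeSet := this
      have := (hw _ this).1
      simpa [subWeight] using this
  have hmin_pos : 0 < minMST G w C := by
    rw [hminMST]
    exact hSpos _ (hSne.csInf_mem hSfin)
  -- bound w f ≤ maxOut
  have hfG : f ∈ G.edgeSet := hfout.1
  have hmaxOut : w f ≤ maxOut G w C := by
    apply le_csSup
    · apply Set.Finite.bddAbove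
      apply Set.Finite.image
      exact Set.Finite.subset (Set.toFinite G.edgeSet) fun e' he' => he'.1
    · exact ⟨f, hfout, rfl⟩
  -- phi C ≥ 1
  have hphi : 1 ≤ phi G w C := by
    rw [phi, le_div_iff₀ hmin_pos, one_mul]
    calc minMST G w C ≤ w e := hmin_le
    _ ≤ w f := hwf
    _ ≤ maxOut G w C := hmaxOut
  -- eval ≥ phi C, contradiction
  have heval : phi G w C ≤ eval G w 𝒞 := by
    apply le_csSup
    · exact Set.Finite.bddAbove (Set.Finite.image _ (Set.toFinite 𝒞))
    · exact ⟨C, hC, rfl⟩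
  linarith

end Bal
end
end
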